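/- Let $\{r_n\} \subset (0,1)$ be a sequence decreasing monotonically to zero with $r_n/r_{n+1} - 1 = a r_n + o(r_n)$ for some $a \ge 0$, and let $\{s_n\}$ be a sequence of positive numbers satisfying $s_{n+1} \le (1 - r_n) s_n + \varepsilon_n r_n$ where $\varepsilon_n \to 0$. Then $s_n \to 0$. -/

import Mathlib

/-!
Telescoping and Cesàro averaging turn `r n / r (n+1) - 1 = a r n + o(r n)` into
`1 / r n = a n + o(n)`, so `r` dominates a multiple of the harmonic series and `∑ r n = ∞`.
Past the point where `ε n < δ`, each step multiplies `s n - δ` by at most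
`1 - r n ≤ exp (-r n)`, and these products tend to zero because `∑ r n = ∞`;
hence `s n < 2 δ` eventually.
-/

open Filter Asymptotics Finset Topology

theorem tendsto_div_natCast_of_tendsto_sub {u : ℕ → ℝ} {a : ℝ}
    (h : Tendsto (fun n => u (n + 1) - u n) atTop (𝓝 a)) :
    Tendsto (fun n => u n / n) atTop (𝓝 a) := by
  have hcesaro := h.cesaro.add (tendsto_const_div_atTop_nhds_zero_nat (u 0))
  rw [add_zero] at hcesaro
  refine hcesaro.congr fun n => ?_
  rw [sum_range_sub (fun i => u i)]
  ring

theorem not_summable_of_tendsto_inv_sub_inv {r : ℕ → ℝ} {a : ℝ} (hr : ∀ n, r n ≠ 0)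
    (h : Tendsto (fun n => (r (n + 1))⁻¹ - (r n)⁻¹) atTop (𝓝 a)) : ¬Summable r := by
  have hinv : (fun n => (r n)⁻¹) =O[atTop] (fun n => (n : ℝ)) := by
    refine isBigO_of_div_tendsto_nhds ?_ a (tendsto_div_natCast_of_tendsto_sub h)
    filter_upwards [eventually_ne_atTop 0] with n hn hn0
    exact absurd (Nat.cast_eq_zero.1 hn0) hn
  have hharmonic : (fun n : ℕ => (n : ℝ)⁻¹) =O[atTop] r := by
    simpa using hinv.inv_rev (Eventually.of_forall fun n hn => absurd (inv_eq_zero.1 hn) (hr n))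
  exact fun hsum => Real.not_summable_natCast_inv (summable_of_isBigO_nat hsum hharmonic)

theorem tendsto_inv_sub_inv_of_isLittleO {r : ℕ → ℝ} {a : ℝ} (hr : ∀ n, r n ≠ 0)
    (hrel : (fun n => r n / r (n + 1) - 1 - a * r n) =o[atTop] r) :
    Tendsto (fun n => (r (n + 1))⁻¹ - (r n)⁻¹) atTop (𝓝 a) := by
  have hdiv := hrel.tendsto_div_nhds_zero.add_const a
  rw [zero_add] at hdiv
  refine hdiv.congr fun n => ?_
  field_simp [hr n, hr (n + 1)]
  ring

theorem prod_one_sub_le_exp_neg_sum {ι : Type*} (s : Finset ι) {r : ι → ℝ}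
    (hr : ∀ i ∈ s, r i ≤ 1) : ∏ i ∈ s, (1 - r i) ≤ Real.exp (-∑ i ∈ s, r i) := by
  rw [← sum_neg_distrib, Real.exp_sum]
  exact prod_le_prod (fun i hi => sub_nonneg.2 (hr i hi)) fun i _ => Real.one_sub_le_exp_neg _

theorem tendsto_prod_Ico_one_sub_of_not_summable {r : ℕ → ℝ} (hr0 : ∀ n, 0 ≤ r n)
    (hr1 : ∀ n, r n ≤ 1) (hsum : ¬Summable r) (N : ℕ) :
    Tendsto (fun n => ∏ i ∈ Ico N n, (1 - r i)) atTop (𝓝 0) := by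
  have hpartial : Tendsto (fun n => ∑ i ∈ range n, r i) atTop atTop :=
    (not_summable_iff_tendsto_nat_atTop_of_nonneg hr0).1 hsum
  have hexp : Tendsto (fun n => Real.exp (-∑ i ∈ Ico N n, r i)) atTop (𝓝 0) := by
    refine Real.tendsto_exp_atBot.comp (tendsto_neg_atTop_atBot.comp ?_)
    refine (tendsto_atTop_add_const_right _ (-∑ i ∈ range N, r i) hpartial).congr' ?_
    filter_upwards [eventually_ge_atTop N] with n hn
    rw [sum_Ico_eq_sub _ hn, sub_eq_add_neg]
  exact squeeze_zero (fun n => prod_nonneg fun i _ => sub_nonneg.2 (hr1 i))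
    (fun n => prod_one_sub_le_exp_neg_sum _ fun i _ => hr1 i) hexp

theorem le_prod_Ico_mul_of_le_mul {t c : ℕ → ℝ} {N : ℕ} (hc : ∀ n ≥ N, 0 ≤ c n)
    (ht : ∀ n ≥ N, t (n + 1) ≤ c n * t n) :
    ∀ n ≥ N, t n ≤ (∏ i ∈ Ico N n, c i) * t N := by
  intro n hn
  induction n, hn using Nat.le_induction with
  | base => simp
  | succ n hn ih =>
    calc t (n + 1) ≤ c n * t n := ht n hn
      _ ≤ c n * ((∏ i ∈ Ico N n, c i) * t N) := mul_le_mul_of_nonneg_left ih (hc n hn)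
      _ = (∏ i ∈ Ico N (n + 1), c i) * t N := by rw [prod_Ico_succ_top hn]; ring

theorem eventually_lt_of_le_one_sub_mul {r t : ℕ → ℝ} (hr0 : ∀ n, 0 ≤ r n)
    (hr1 : ∀ n, r n ≤ 1) (hsum : ¬Summable r) {N : ℕ}
    (ht : ∀ n ≥ N, t (n + 1) ≤ (1 - r n) * t n) {δ : ℝ} (hδ : 0 < δ) :
    ∀ᶠ n in atTop, t n < δ := by
  have hprod := (tendsto_prod_Ico_one_sub_of_not_summable hr0 hr1 hsum N).mul_const (t N)
  rw [zero_mul] at hprod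
  filter_upwards [eventually_ge_atTop N, hprod.eventually_lt_const hδ] with n hn hlt
  exact (le_prod_Ico_mul_of_le_mul (fun n _ => sub_nonneg.2 (hr1 n)) ht n hn).trans_lt hlt

theorem tendsto_nhds_zero_of_le_one_sub_mul_add_mul {r s ε : ℕ → ℝ} (hr0 : ∀ n, 0 ≤ r n)
    (hr1 : ∀ n, r n ≤ 1) (hsum : ¬Summable r) (hs : ∀ n, 0 ≤ s n)
    (hε : Tendsto ε atTop (𝓝 0)) (hrec : ∀ n, s (n + 1) ≤ (1 - r n) * s n + ε n * r n) :
    Tendsto s atTop (𝓝 0) := by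
  refine tendsto_order.2 ⟨fun b hb => Eventually.of_forall fun n => hb.trans_le (hs n),
    fun δ hδ => ?_⟩
  obtain ⟨N, hN⟩ := eventually_atTop.1 (hε.eventually_lt_const (half_pos hδ))
  have hshift : ∀ n ≥ N, s (n + 1) - δ / 2 ≤ (1 - r n) * (s n - δ / 2) := by
    intro n hn
    have := mul_le_mul_of_nonneg_right (hN n hn).le (hr0 n)
    linarith [hrec n]
  filter_upwards [eventually_lt_of_le_one_sub_mul (t := fun n => s n - δ / 2) hr0 hr1 hsum hshift
    (half_pos hδ)] with n hn
  linarith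

theorem stmt2_general (r : ℕ → ℝ)
    (hpos : ∀ n, 0 < r n) (hlt1 : ∀ n, r n < 1)
    (a : ℝ)
    (hrel : (fun n => r n / r (n + 1) - 1 - a * r n) =o[atTop] r)
    (s ε : ℕ → ℝ)
    (hs : ∀ n, 0 < s n)
    (hεlim : Tendsto ε atTop (nhds 0))
    (hrec : ∀ n, s (n + 1) ≤ (1 - r n) * s n + ε n * r n) :
    Tendsto s atTop (nhds 0) := by
  have hr : ∀ n, r n ≠ 0 := fun n => (hpos n).ne'
  have hsum : ¬Summable r :=
    not_summable_of_tendsto_inv_sub_inv hr (tendsto_inv_sub_inv_of_isLittleO hr hrel)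
  exact tendsto_nhds_zero_of_le_one_sub_mul_add_mul (fun n => (hpos n).le) (fun n => (hlt1 n).le)
    hsum (fun n => (hs n).le) hεlim hrec

/-- Lemma 3 of the paper: if `r n ∈ (0,1)` decreases monotonically to zero with
`r n / r (n+1) - 1 = a r n + o(r n)` for some `a ≥ 0`, and `s n > 0` satisfies
`s (n+1) ≤ (1 - r n) s n + ε n * r n` with `ε n → 0`, then `s n → 0`. -/
theorem stmt2 (r : ℕ → ℝ)
    (hpos : ∀ n, 0 < r n) (hlt1 : ∀ n, r n < 1)
    (hmono : ∀ n, r (n + 1) ≤ r n)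
    (hlim : Tendsto r atTop (nhds 0))
    (a : ℝ) (ha : 0 ≤ a)
    (hrel : (fun n => r n / r (n + 1) - 1 - a * r n) =o[atTop] r)
    (s ε : ℕ → ℝ)
    (hs : ∀ n, 0 < s n)
    (hε : ∀ n, 0 ≤ ε n)
    (hεlim : Tendsto ε atTop (nhds 0))
    (hrec : ∀ n, s (n + 1) ≤ (1 - r n) * s n + ε n * r n) :
    Tendsto s atTop (nhds 0) :=
  stmt2_general r hpos hlt1 a hrel s ε hs hεlim hrec
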